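/- arXiv:2012.07106 — 2 statements merged into one kernel-verified Lean document; each statement's English description precedes it below -/
import Mathlib

section
/- For a symmetric positive definite matrix A and symmetric matrices X, Y, the Wasserstein inner product g_W(X,Y) = tr(Γ_A[Y]·A·Γ_A[X]) equals (1/2)·tr(Γ_A[Y]·X), and it defines a positive definite symmetric bilinear form on the space of symmetric matrices. -/
open Matrix

/-!
Write `G_X` for the solution of `A G + G A = X`. The Sylvester equation has at most one solution:
if `A G + G A = 0` then `0 = tr(Gᴴ (A G + G A)) = tr(Gᴴ A G) + tr(G A Gᴴ)`, a sum of a nonnegative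
and, unless `G = 0`, a positive term. Hence `G_X` is symmetric whenever `X` is, and then
`tr(G_Y G_X A) = tr(G_Y A G_X)` by transposing, so `tr(G_Y X) = 2 tr(G_Y A G_X)`. Transposing once
more gives symmetry, and `tr(G_X X) = 2 tr(G_Xᵀ A G_X) > 0` gives positivity.
-/

open scoped ComplexOrder

namespace Matrix

variable {m n 𝕜 : Type*} [Fintype m] [Fintype n] [RCLike 𝕜]

lemma PosDef.trace_conjTranspose_mul_mul_pos {A : Matrix n n 𝕜} (hA : A.PosDef)
    {M : Matrix n m 𝕜} (hM : M ≠ 0) : 0 < (Mᴴ * A * M).trace := by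
  classical
  have hpsd := hA.posSemidef.conjTranspose_mul_mul_same M
  refine hpsd.trace_nonneg.lt_of_ne' fun htr => hM ?_
  have hzero : Mᴴ * A * M = 0 := hpsd.trace_eq_zero_iff.mp htr
  have hmulVec (x : m → 𝕜) : M *ᵥ x = 0 := by
    by_contra hx
    have hpos := hA.dotProduct_mulVec_pos hx
    rwa [star_mulVec, ← dotProduct_mulVec, mulVec_mulVec, mulVec_mulVec, hzero,
      zero_mulVec, dotProduct_zero, lt_self_iff_false] at hpos
  ext i j
  simpa using congrFun (hmulVec (Pi.single j 1)) i

lemma PosDef.eq_zero_of_mul_add_mul_eq_zero {A G : Matrix n n 𝕜} (hA : A.PosDef)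
    (h : A * G + G * A = 0) : G = 0 := by
  by_contra hG
  have hpos : 0 < (Gᴴ * A * G).trace := hA.trace_conjTranspose_mul_mul_pos hG
  have hnonneg : 0 ≤ (Gᴴᴴ * A * Gᴴ).trace :=
    (hA.posSemidef.conjTranspose_mul_mul_same Gᴴ).trace_nonneg
  have hsplit : (Gᴴ * (A * G + G * A)).trace = (Gᴴ * A * G).trace + (Gᴴᴴ * A * Gᴴ).trace := by
    rw [Matrix.mul_add, trace_add, conjTranspose_conjTranspose, ← Matrix.mul_assoc,
      ← Matrix.mul_assoc, ← trace_mul_cycle G A Gᴴ]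
  rw [h, Matrix.mul_zero, trace_zero] at hsplit
  exact (add_pos_of_pos_of_nonneg hpos hnonneg).ne' hsplit.symm

lemma PosDef.isHermitian_of_mul_add_mul_eq {A G X : Matrix n n 𝕜} (hA : A.PosDef)
    (hX : X.IsHermitian) (h : A * G + G * A = X) : G.IsHermitian := by
  have hconj : A * Gᴴ + Gᴴ * A = X := by
    rw [← hX.eq, ← h, conjTranspose_add, conjTranspose_mul, conjTranspose_mul, hA.isHermitian.eq,
      add_comm]
  have hdiff : A * (Gᴴ - G) + (Gᴴ - G) * A = 0 := by
    rw [Matrix.mul_sub, Matrix.sub_mul, sub_add_sub_comm, hconj, h, sub_self]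
  exact sub_eq_zero.mp (hA.eq_zero_of_mul_add_mul_eq_zero hdiff)

section CommSemiring

variable {R : Type*} [CommSemiring R]

lemma trace_mul_mul_comm_of_isSymm {A G H : Matrix n n R} (hA : A.IsSymm) (hG : G.IsSymm)
    (hH : H.IsSymm) : (H * A * G).trace = (G * A * H).trace := by
  rw [← trace_transpose, transpose_mul, transpose_mul, hA.eq, hG.eq, hH.eq, Matrix.mul_assoc]

lemma trace_mul_mul_add_mul_of_isSymm {A G H : Matrix n n R} (hA : A.IsSymm) (hG : G.IsSymm)
    (hH : H.IsSymm) : (H * (A * G + G * A)).trace = 2 * (H * A * G).trace := by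
  rw [Matrix.mul_add, trace_add, ← Matrix.mul_assoc, ← Matrix.mul_assoc, ← trace_mul_cycle G A H,
    trace_mul_mul_comm_of_isSymm hA hH hG, two_mul]

end CommSemiring

end Matrix

/-- The Wasserstein inner product `g_W(X,Y) = tr(Γ_A[Y]·A·Γ_A[X])` equals
`(1/2)·tr(Γ_A[Y]·X)`, and it is a positive definite symmetric bilinear form on
symmetric matrices. -/
theorem wasserstein_metric_props {n : ℕ} (A : Matrix (Fin n) (Fin n) ℝ) (hA : A.PosDef) :
    (∀ X Y GX GY : Matrix (Fin n) (Fin n) ℝ, Xᵀ = X → Yᵀ = Y →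
        A * GX + GX * A = X → A * GY + GY * A = Y →
        (GY * A * GX).trace = (1/2) * (GY * X).trace) ∧
    -- symmetry
    (∀ X Y GX GY : Matrix (Fin n) (Fin n) ℝ, Xᵀ = X → Yᵀ = Y →
        A * GX + GX * A = X → A * GY + GY * A = Y →
        (1/2) * (GY * X).trace = (1/2) * (GX * Y).trace) ∧
    -- bilinearity (in the first argument; symmetry gives the second)
    (∀ (c : ℝ) (X X' Y G GY : Matrix (Fin n) (Fin n) ℝ), Xᵀ = X → X'ᵀ = X' → Yᵀ = Y →
        A * G + G * A = X + c • X' → A * GY + GY * A = Y →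
        ∀ GX GX' : Matrix (Fin n) (Fin n) ℝ,
          A * GX + GX * A = X → A * GX' + GX' * A = X' →
          (1/2) * (GY * (X + c • X')).trace
            = (1/2) * (GY * X).trace + c * ((1/2) * (GY * X').trace)) ∧
    -- positive definiteness
    (∀ X GX : Matrix (Fin n) (Fin n) ℝ, Xᵀ = X → A * GX + GX * A = X → X ≠ 0 →
        0 < (1/2) * (GX * X).trace) := by
  have hAs : A.IsSymm := isHermitian_iff_isSymm.mp hA.isHermitian
  have hsol {G X : Matrix (Fin n) (Fin n) ℝ} (hX : Xᵀ = X) (h : A * G + G * A = X) : G.IsSymm :=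
    isHermitian_iff_isSymm.mp (hA.isHermitian_of_mul_add_mul_eq hX h)
  have hgW (X Y GX GY : Matrix (Fin n) (Fin n) ℝ) (hX : Xᵀ = X) (hY : Yᵀ = Y)
      (hGX : A * GX + GX * A = X) (hGY : A * GY + GY * A = Y) :
      (GY * A * GX).trace = (1/2) * (GY * X).trace := by
    rw [← hGX, trace_mul_mul_add_mul_of_isSymm hAs (hsol hX hGX) (hsol hY hGY)]
    ring
  refine ⟨hgW, ?_, ?_, ?_⟩
  · intro X Y GX GY hX hY hGX hGY
    rw [← hgW X Y GX GY hX hY hGX hGY, ← hgW Y X GY GX hY hX hGY hGX,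
      trace_mul_mul_comm_of_isSymm hAs (hsol hX hGX) (hsol hY hGY)]
  · intros
    rw [Matrix.mul_add, trace_add, Matrix.mul_smul, trace_smul, smul_eq_mul]
    ring
  · intro X GX hX hGX hX0
    have hGX0 : GX ≠ 0 := by
      rintro rfl
      exact hX0 (by simpa using hGX.symm)
    rw [← hgW X X GX GX hX hX hGX hGX]
    simpa [(hsol hX hGX).eq] using hA.trace_conjTranspose_mul_mul_pos hGX0
end

section
/- For any orthogonal matrix O, the map A ↦ OAO^T on symmetric positive definite matrices is an isometry of the Wasserstein metric: for symmetric X, Y, one has g_W at OAO^T of (OXO^T, OYO^T) equals g_W at A of (X, Y). -/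
/-!
For positive definite `A` the Lyapunov equation `A Γ + Γ A = Y` has at most one solution: pairing
`A Z + Z A = 0` with `Zᴴ` gives `tr (Zᴴ A Z) + tr (Z A Zᴴ) = 0`, a sum of traces of positive
semidefinite matrices, so `Zᴴ A Z = 0` and hence `Z = 0`. Conjugating the equation at `A` by `O`
shows that `O Γ Oᵀ` solves it at the positive definite matrix `O A Oᵀ`, so `Γ' = O Γ Oᵀ`, and
the trace of `Γ' (O X Oᵀ) = O (Γ X) Oᵀ` equals that of `Γ X`.
-/

open Matrix
open scoped ComplexOrder

section Conjugation

variable {R : Type*} [Semiring R] {u v : R}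

theorem conj_mul_conj (h : v * u = 1) (a b : R) :
    u * a * v * (u * b * v) = u * (a * b) * v := by
  simp only [mul_assoc, ← mul_assoc v u, h, one_mul]

theorem conj_mul_add_mul_conj (h : v * u = 1) (a g : R) :
    u * a * v * (u * g * v) + u * g * v * (u * a * v) = u * (a * g + g * a) * v := by
  rw [conj_mul_conj h, conj_mul_conj h, mul_add, add_mul]

end Conjugation

theorem Matrix.trace_conj_of_mul_eq_one {m R : Type*} [Fintype m] [DecidableEq m] [CommSemiring R]
    {U V : Matrix m m R} (h : V * U = 1) (M : Matrix m m R) : trace (U * M * V) = trace M := by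
  rw [trace_mul_cycle, h, Matrix.one_mul]

namespace Matrix.PosDef

variable {n 𝕜 : Type*} [Fintype n] [RCLike 𝕜] {A : Matrix n n 𝕜}

theorem eq_zero_of_conjTranspose_mul_mul_same_eq_zero (hA : A.PosDef) {Z : Matrix n n 𝕜}
    (h : Zᴴ * A * Z = 0) : Z = 0 := by
  refine ext_iff_mulVec.mpr fun x => ?_
  by_contra hx
  rw [zero_mulVec] at hx
  have hpos := hA.dotProduct_mulVec_pos hx
  rw [star_mulVec, ← dotProduct_mulVec, mulVec_mulVec, mulVec_mulVec, h, zero_mulVec,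
    dotProduct_zero] at hpos
  exact lt_irrefl _ hpos

theorem eq_zero_of_mul_add_mul_eq_zero_s7 (hA : A.PosDef) {Z : Matrix n n 𝕜}
    (h : A * Z + Z * A = 0) : Z = 0 := by
  have hL := hA.posSemidef.conjTranspose_mul_mul_same Z
  have hR := hA.posSemidef.mul_mul_conjTranspose_same Z
  have hsum : (Zᴴ * A * Z).trace + (Z * A * Zᴴ).trace = 0 := by
    rw [trace_mul_comm (Z * A) Zᴴ, mul_assoc Zᴴ A Z, ← trace_add, ← mul_add, h, mul_zero,
      trace_zero]
  have htrace : (Zᴴ * A * Z).trace = 0 :=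
    (add_eq_zero_iff_of_nonneg hL.trace_nonneg hR.trace_nonneg).mp hsum |>.1
  exact hA.eq_zero_of_conjTranspose_mul_mul_same_eq_zero (hL.trace_eq_zero_iff.mp htrace)

theorem injective_mul_add_mul (hA : A.PosDef) : Function.Injective fun G => A * G + G * A :=
  fun G₁ G₂ (h : A * G₁ + G₁ * A = A * G₂ + G₂ * A) =>
    sub_eq_zero.mp <| hA.eq_zero_of_mul_add_mul_eq_zero_s7 <| by
      rw [mul_sub, sub_mul, sub_add_sub_comm, h, sub_self]

end Matrix.PosDef

theorem wasserstein_orthogonal_isometry_general {n : ℕ}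
    (A X Y O GY GY' : Matrix (Fin n) (Fin n) ℝ)
    (hA : A.PosDef) (hO : Oᵀ * O = 1)
    (hGY : A * GY + GY * A = Y)
    (hGY' : (O * A * Oᵀ) * GY' + GY' * (O * A * Oᵀ) = O * Y * Oᵀ) :
    (1/2) * (GY' * (O * X * Oᵀ)).trace = (1/2) * (GY * X).trace := by
  have hOstar : star O = Oᵀ := by
    rw [star_eq_conjTranspose, conjTranspose_eq_transpose_of_trivial]
  have hOunit : IsUnit O := (isUnit_iff_isUnit_det O).mpr (isUnit_det_of_left_inverse hO)
  have hB : (O * A * Oᵀ).PosDef := hOstar ▸ hOunit.posDef_star_right_conjugate_iff.mpr hA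
  have hGY'_eq : GY' = O * GY * Oᵀ :=
    hB.injective_mul_add_mul <| by simp only [hGY', conj_mul_add_mul_conj hO, hGY]
  rw [hGY'_eq, conj_mul_conj hO, trace_conj_of_mul_eq_one hO]

/-- The orthogonal action `A ↦ O A Oᵀ` is an isometry of the Wasserstein metric:
`g_W|_{OAOᵀ}(OXOᵀ, OYOᵀ) = g_W|_A(X,Y)`. -/
theorem wasserstein_orthogonal_isometry {n : ℕ}
    (A X Y O GY GY' : Matrix (Fin n) (Fin n) ℝ)
    (hA : A.PosDef) (hO : Oᵀ * O = 1)
    (hX : Xᵀ = X) (hY : Yᵀ = Y)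
    (hGY : A * GY + GY * A = Y)
    (hGY' : (O * A * Oᵀ) * GY' + GY' * (O * A * Oᵀ) = O * Y * Oᵀ) :
    (1/2) * (GY' * (O * X * Oᵀ)).trace = (1/2) * (GY * X).trace :=
  wasserstein_orthogonal_isometry_general A X Y O GY GY' hA hO hGY hGY'
end
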